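/- arXiv:0911.4851 — 3 statements merged into one kernel-verified Lean document; each statement's English description precedes it below -/
import Mathlib

section
/- Let G be a strong M-graph, let v'_1, v'_2 be real vertices belonging to a single connected component of G(ℝ), and let v''_1, v''_2 be real vertices belonging to a single connected component of G(ℝ). Then the divisors v'_1 + v'_2 and v''_1 + v''_2 are linearly equivalent on G. -/
/-- A finite graph: finite sets of vertices and edges, and an incidence map
assigning to each edge the (unordered) pair of its ends (loops and multiple
edges are allowed). -/
structure FinGraph where
  V : Type
  E : Type
  [decV : DecidableEq V]
  [fintV : Fintype V]
  [fintE : Fintype E]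
  ψ : E → Sym2 V

attribute [instance] FinGraph.decV FinGraph.fintV FinGraph.fintE

namespace FinGraph

variable (G : FinGraph)

/-- Two vertices are adjacent if some edge has exactly them as its ends. -/
def Adj (v w : G.V) : Prop := ∃ e : G.E, G.ψ e = s(v, w)

/-- A graph is connected if it is nonempty and any two vertices are joined by a
walk (equivalently, related by the reflexive-transitive closure of adjacency). -/
def Connected : Prop := Nonempty G.V ∧ ∀ v w : G.V, Relation.ReflTransGen G.Adj v w

/-- The number of connected components. -/
noncomputable def numComponents : ℕ :=
  Nat.card (Quotient (Relation.EqvGen.setoid G.Adj))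

/-- The genus `g(G) = c(G) + e(G) - v(G)`. -/
noncomputable def genus : ℤ :=
  (numComponents G : ℤ) + (Fintype.card G.E : ℤ) - (Fintype.card G.V : ℤ)

/-- A real structure on a finite graph: involutions on vertices and edges
compatible with the incidence map. -/
structure RealStructure (G : FinGraph) where
  ιV : G.V → G.V
  ιE : G.E → G.E
  ιV_invol : ∀ v, ιV (ιV v) = v
  ιE_invol : ∀ e, ιE (ιE e) = e
  compat : ∀ e, G.ψ (ιE e) = (G.ψ e).map ιV

variable {G} (σ : RealStructure G)

/-- A vertex is real if it is fixed by the involution. -/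
def RealV (v : G.V) : Prop := σ.ιV v = v

/-- An edge is real if it is fixed by the involution. -/
def RealE (e : G.E) : Prop := σ.ιE e = e

/-- A real edge is isolated if some end of it is not a real vertex. -/
def IsolatedRealE (e : G.E) : Prop := RealE σ e ∧ ∃ v ∈ G.ψ e, ¬ RealV σ v

/-- A non-isolated real edge: a real edge all of whose ends are real vertices. -/
def NonIsolatedRealE (e : G.E) : Prop := RealE σ e ∧ ∀ v ∈ G.ψ e, RealV σ v

/-- The vertex set of the real locus graph `G(ℝ)`: the real vertices. -/
def RV := {v : G.V // RealV σ v}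

/-- Adjacency in the real locus graph `G(ℝ)`: via non-isolated real edges. -/
def adjR (v w : RV σ) : Prop :=
  ∃ e : G.E, NonIsolatedRealE σ e ∧ G.ψ e = s(v.1, w.1)

/-- The connected components of the real locus graph `G(ℝ)`. -/
def CompR := Quotient (Relation.EqvGen.setoid (adjR σ))

/-- The genus of a connected component of `G(ℝ)`:
`1 + (number of its edges) - (number of its vertices)`. -/
noncomputable def compGenus (c : CompR σ) : ℤ :=
  1 + (Nat.card {e : G.E // NonIsolatedRealE σ e ∧
        ∃ v : RV σ, v.1 ∈ G.ψ e ∧ Quotient.mk (Relation.EqvGen.setoid (adjR σ)) v = c} : ℤ)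
    - (Nat.card {v : RV σ // Quotient.mk (Relation.EqvGen.setoid (adjR σ)) v = c} : ℤ)

/-- The number `s(G) = e^i(G) + Σ_i (g(G(ℝ)_i) + 1)`. -/
noncomputable def sNum : ℤ :=
  (Nat.card {e : G.E // IsolatedRealE σ e} : ℤ) + ∑ᶠ c : CompR σ, (compGenus σ c + 1)

/-- One step of a walk containing no real vertex and no real edge. -/
def nonRealAdj (v w : G.V) : Prop :=
  ¬ RealV σ v ∧ ¬ RealV σ w ∧ ∃ e : G.E, ¬ RealE σ e ∧ G.ψ e = s(v, w)

/-- `a(G) = 1` iff there is a non-real vertex `v` and a walk from `v` to `v̄`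
containing no real vertex and no real edge. -/
def aProp : Prop :=
  ∃ v : G.V, ¬ RealV σ v ∧ Relation.ReflTransGen (nonRealAdj σ) v (σ.ιV v)

/-- `a(G)` as a number. -/
noncomputable def aNum : ℕ := @ite _ (aProp σ) (Classical.dec _) 1 0

/-- The degree of a divisor (a divisor on `G` is a function `G.V → ℤ`). -/
def deg (D : G.V → ℤ) : ℤ := ∑ v, D v

/-- A divisor is effective if all its coefficients are nonnegative. -/
def Eff (D : G.V → ℤ) : Prop := ∀ v, 0 ≤ D v

variable (G)

/-- The contribution of the edge `e` to the principal divisor `Δ(f)`. -/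
def edgeLap (f : G.V → ℤ) (e : G.E) : G.V → ℤ :=
  Sym2.lift ⟨fun a b v => (if v = a then f b - f a else 0) + (if v = b then f a - f b else 0),
    fun a b => funext fun v => add_comm _ _⟩ (G.ψ e)

/-- The principal divisor `Δ(f)(v) = Σ_{e, ψ(e) = {v,w}} (f(w) - f(v))`. -/
def Lap (f : G.V → ℤ) : G.V → ℤ := fun v => ∑ e, edgeLap G f e v

/-- Two divisors are linearly equivalent if their difference is principal. -/
def LinEquiv (D₁ D₂ : G.V → ℤ) : Prop := ∃ f : G.V → ℤ, D₂ = D₁ + Lap G f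

variable {G}

/-- The conjugate divisor `D̄(v) = D(v̄)`. -/
def conjDiv (D : G.V → ℤ) : G.V → ℤ := fun v => D (σ.ιV v)

/-- A divisor is real if it equals its conjugate. -/
def IsRealDiv (D : G.V → ℤ) : Prop := conjDiv σ D = D

variable (G)

/-- The divisor consisting of the single vertex `v`. -/
def unitDiv (v : G.V) : G.V → ℤ := fun w => if w = v then 1 else 0

/-- `RankGE G D r` : every effective divisor `E` of degree `r` is dominated by
some effective divisor `D'` linearly equivalent to `D`.  The rank `rk(D)` is
the greatest `r` with this property (note it holds vacuously for `r < 0`, so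
the greatest such `r` is `-1` exactly when `|D| = ∅`). -/
def RankGE (D : G.V → ℤ) (r : ℤ) : Prop :=
  ∀ E : G.V → ℤ, Eff E → deg E = r →
    ∃ D' : G.V → ℤ, LinEquiv G D D' ∧ Eff D' ∧ Eff (D' - E)

/-- `r` is the rank of `D`: it is the greatest element of `{r | RankGE G D r}`. -/
def HasRank (D : G.V → ℤ) (r : ℤ) : Prop := IsGreatest {r' : ℤ | RankGE G D r'} r

variable {G}

/-- The real analogue of `RankGE`, using real effective divisors only. -/
def RealRankGE (D : G.V → ℤ) (r : ℤ) : Prop :=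
  ∀ E : G.V → ℤ, Eff E → IsRealDiv σ E → deg E = r →
    ∃ D' : G.V → ℤ, LinEquiv G D D' ∧ Eff D' ∧ IsRealDiv σ D' ∧ Eff (D' - E)

/-- `r` is the real rank of `D`. -/
def HasRealRank (D : G.V → ℤ) (r : ℤ) : Prop :=
  IsGreatest {r' : ℤ | RealRankGE σ D r'} r

/-- An M-graph: a connected graph with a real structure, no isolated real
edges, and `s(G) = g(G) + 1`. -/
def IsMGraph : Prop :=
  G.Connected ∧ (∀ e : G.E, ¬ IsolatedRealE σ e) ∧ sNum σ = G.genus + 1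

/-- A strong M-graph: an M-graph such that `G(ℝ)` has `g(G) + 1` connected
components. -/
def IsStrongMGraph : Prop :=
  IsMGraph σ ∧ (Nat.card (CompR σ) : ℤ) = G.genus + 1

/-- The degree of the restriction of a divisor to the connected component `c`
of the real locus graph `G(ℝ)`. -/
noncomputable def degOn (c : CompR σ) (D : G.V → ℤ) : ℤ :=
  ∑ᶠ (v : {v : RV σ // Quotient.mk (Relation.EqvGen.setoid (adjR σ)) v = c}), D v.1.1

/-- The valence of a vertex: the number of edges incident to it. -/
noncomputable def valence (v : G.V) : ℤ := (Nat.card {e : G.E // v ∈ G.ψ e} : ℤ)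

/-- The canonical divisor `K_G = Σ_v (val(v) - 2) v`. -/
noncomputable def canonicalDiv : G.V → ℤ := fun v => valence v - 2

end FinGraph

/-!
Counting orbits of the conjugation gives `2 v(G/ι) = v(G) + v(G(ℝ))` and
`2 e(G/ι) = e(G) + e(G(ℝ))` (there are no isolated real edges), while
`s(G) = c(G(ℝ)) = g(G) + 1` means `v(G(ℝ)) - e(G(ℝ)) = g(G) + 1`. Together these say that the
quotient graph `G/ι` is a tree. Every edge of a tree is a bridge, and the indicator of one side,
pulled back to `G`, is a function whose Laplacian lives on the orbit of that edge: it is `y - x`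
for a real edge `xy` and `y + ȳ - x - x̄` for a non-real one. Hence `x + x̄ ∼ y + ȳ` for all
vertices of the connected graph `G`, and `u ∼ w` for real vertices in one component of `G(ℝ)`.
For real `v'₁, v''₁` this gives `v'₁ + v'₂ ∼ 2 v'₁ ∼ 2 v''₁ ∼ v''₁ + v''₂`.
-/

section Involution

variable {X : Type*} {j : X → X}

def involSetoid (hj : Function.Involutive j) : Setoid X where
  r x y := x = y ∨ x = j y
  iseqv := by
    refine ⟨fun x => .inl rfl, ?_, ?_⟩
    · rintro x y (rfl | rfl)
      exacts [.inl rfl, .inr (hj y).symm]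
    · rintro x y z (rfl | rfl) (rfl | rfl)
      exacts [.inl rfl, .inr rfl, .inr rfl, .inl (hj z)]

theorem involSetoid_mk_eq_mk_iff (hj : Function.Involutive j) {x y : X} :
    Quotient.mk (involSetoid hj) x = Quotient.mk (involSetoid hj) y ↔ x = y ∨ x = j y :=
  Quotient.eq

theorem involSetoid_mk_apply (hj : Function.Involutive j) (x : X) :
    Quotient.mk (involSetoid hj) (j x) = Quotient.mk (involSetoid hj) x :=
  Quotient.sound (.inr rfl)

/-- Every orbit is a pair or a fixed point. -/
theorem two_mul_card_quotient_involSetoid [Finite X] (hj : Function.Involutive j) :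
    2 * Nat.card (Quotient (involSetoid hj)) = Nat.card X + Nat.card {x // j x = x} := by
  classical
  have := Fintype.ofFinite X
  have := Fintype.ofFinite (Quotient (involSetoid hj))
  let π := Quotient.mk (involSetoid hj)
  have horbit : ∀ c, (Finset.univ.filter (π · = c)).card
      + (Finset.univ.filter (fun z => j z = z ∧ π z = c)).card = 2 := by
    intro c
    obtain ⟨x, rfl⟩ := Quotient.exists_rep c
    have hfiber : Finset.univ.filter (π · = π x) = {x, j x} := by
      ext z; simp [π, involSetoid_mk_eq_mk_iff]
    by_cases hx : j x = x
    · have hfix : Finset.univ.filter (fun z => j z = z ∧ π z = π x) = {x} := by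
        ext z; simp only [Finset.mem_filter, Finset.mem_univ, true_and, Finset.mem_singleton,
          π, involSetoid_mk_eq_mk_iff, hx, or_self]
        exact ⟨And.right, fun h => ⟨h ▸ hx, h⟩⟩
      rw [hfiber, hfix, hx, Finset.pair_eq_singleton]
      rfl
    · have hfix : Finset.univ.filter (fun z => j z = z ∧ π z = π x) = ∅ := by
        ext z; simp only [Finset.mem_filter, Finset.mem_univ, true_and, Finset.notMem_empty,
          iff_false, not_and, π, involSetoid_mk_eq_mk_iff]
        rintro hz (rfl | rfl)
        exacts [hx hz, hx (by rw [hj] at hz; exact hz.symm)]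
      rw [hfiber, hfix, Finset.card_pair (Ne.symm hx)]
      rfl
  rw [Nat.card_eq_fintype_card (α := X), Nat.card_eq_fintype_card (α := {x // j x = x}),
    Fintype.card_subtype, ← Finset.card_univ,
    Finset.card_eq_sum_card_fiberwise (f := π) (t := Finset.univ) (by simp),
    Finset.card_eq_sum_card_fiberwise (f := π) (t := Finset.univ) (by simp),
    ← Finset.sum_add_distrib]
  simp only [Finset.filter_filter, horbit, Finset.sum_const, Finset.card_univ, smul_eq_mul,
    Nat.card_eq_fintype_card, mul_comm]

end Involution

theorem Nat.card_eq_sum_card_fiber {X Y : Type*} [Finite X] [Fintype Y] (f : X → Y) :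
    Nat.card X = ∑ c, Nat.card {x // f x = c} :=
  (Nat.card_congr (Equiv.sigmaFiberEquiv f)).symm.trans Nat.card_sigma

theorem Sym2.exists_eq_mk {α : Type*} (z : Sym2 α) : ∃ x y, z = s(x, y) := by
  induction z using Sym2.ind with | _ x y => exact ⟨x, y, rfl⟩

namespace FinGraph

section Bridge

variable (H : FinGraph)

theorem numComponents_eq_one_of_connected (h : H.Connected) : H.numComponents = 1 := by
  obtain ⟨⟨v⟩, hconn⟩ := h
  have : Subsingleton (Quotient (Relation.EqvGen.setoid H.Adj)) :=
    ⟨Quotient.ind₂ fun x y =>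
      Quotient.sound (Relation.EqvGen.reflTransGen_le_eqvGen _ _ _ (hconn x y))⟩
  exact Nat.card_eq_one_iff_unique.mpr ⟨this, ⟨Quotient.mk _ v⟩⟩

def deleteEdgeGraph (ε : H.E) : SimpleGraph H.V :=
  SimpleGraph.fromEdgeSet (H.ψ '' {e | e ≠ ε})

variable {H}

theorem deleteEdgeGraph_reachable {ε e : H.E} (he : e ≠ ε) {v w : H.V} (h : H.ψ e = s(v, w)) :
    (H.deleteEdgeGraph ε).Reachable v w := by
  by_cases hvw : v = w
  · exact hvw ▸ .rfl
  · exact SimpleGraph.Adj.reachable ((SimpleGraph.fromEdgeSet_adj _).2 ⟨⟨e, he, h⟩, hvw⟩)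

theorem card_edgeSet_deleteEdgeGraph_lt (ε : H.E) :
    Nat.card (H.deleteEdgeGraph ε).edgeSet < Nat.card H.E :=
  calc Nat.card (H.deleteEdgeGraph ε).edgeSet
      ≤ Nat.card (H.ψ '' {e | e ≠ ε}) :=
        Nat.card_mono (Set.toFinite _) (SimpleGraph.edgeSet_fromEdgeSet _ ▸ Set.sdiff_subset)
    _ ≤ Nat.card {e : H.E | e ≠ ε} := Nat.card_image_le (Set.toFinite _)
    _ < Nat.card H.E := Finite.card_subtype_lt (x := ε) (by simp)

/-- Such a graph is a tree: if `a` and `b` were still joined without `ε`, the graph minus `ε`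
would be connected with only `v - 2` edges. -/
theorem exists_cut_of_card_V_eq_card_E_add_one (hconn : H.Connected)
    (hcard : Nat.card H.V = Nat.card H.E + 1) {ε : H.E} {a b : H.V}
    (hab : H.ψ ε = s(a, b)) :
    ∃ S : Set H.V, a ∈ S ∧ b ∉ S ∧
      ∀ e, e ≠ ε → ∀ v w, H.ψ e = s(v, w) → (v ∈ S ↔ w ∈ S) := by
  have hcardΓ := card_edgeSet_deleteEdgeGraph_lt ε
  set Γ := H.deleteEdgeGraph ε
  have hstep : ∀ e, e ≠ ε → ∀ v w, H.ψ e = s(v, w) → Γ.Reachable v w :=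
    fun e he v w h => deleteEdgeGraph_reachable he h
  refine ⟨{x | Γ.Reachable a x}, .rfl, fun hb => ?_,
    fun e he v w h => ⟨fun hv => hv.trans (hstep e he v w h),
      fun hw => hw.trans (hstep e he v w h).symm⟩⟩
  have hΓ : Γ.Connected := by
    refine SimpleGraph.connected_iff_exists_forall_reachable _ |>.mpr ⟨a, fun x => ?_⟩
    induction hconn.2 a x with
    | refl => exact .rfl
    | @tail v w _ hvw ih =>
      obtain ⟨e, he⟩ := hvw
      refine ih.trans ?_
      by_cases heε : e = ε
      · rw [heε, hab, Sym2.eq_iff] at he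
        rcases he with ⟨rfl, rfl⟩ | ⟨rfl, rfl⟩
        exacts [hb, hb.symm]
      · exact hstep e heε v w he
  have := hΓ.card_vert_le_card_edgeSet_add_one
  omega

end Bridge

section Laplacian

variable (G : FinGraph)

theorem edgeLap_of_ψ_eq (f : G.V → ℤ) {e : G.E} {x y : G.V} (h : G.ψ e = s(x, y)) :
    edgeLap G f e =
      fun v => (if v = x then f y - f x else 0) + (if v = y then f x - f y else 0) := by
  rw [edgeLap, h, Sym2.lift_mk]

theorem edgeLap_add (f g : G.V → ℤ) (e : G.E) :
    edgeLap G (f + g) e = edgeLap G f e + edgeLap G g e := by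
  obtain ⟨x, y, h⟩ := Sym2.exists_eq_mk (G.ψ e)
  simp only [edgeLap_of_ψ_eq G _ h]
  funext v
  simp only [Pi.add_apply]
  split_ifs <;> ring

theorem edgeLap_zero (e : G.E) : edgeLap G 0 e = 0 := by
  obtain ⟨x, y, h⟩ := Sym2.exists_eq_mk (G.ψ e)
  simp [edgeLap_of_ψ_eq G _ h]
  rfl

theorem edgeLap_eq_unitDiv_sub {f : G.V → ℤ} {e : G.E} {x y : G.V} (h : G.ψ e = s(x, y))
    (hx : f x = 1) (hy : f y = 0) : edgeLap G f e = unitDiv G y - unitDiv G x := by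
  have hxy : x ≠ y := fun hxy => by simp [hxy, hy] at hx
  rw [edgeLap_of_ψ_eq G f h]
  funext v
  simp only [unitDiv, Pi.sub_apply, hx, hy]
  split_ifs <;> simp_all

theorem Lap_add (f g : G.V → ℤ) : Lap G (f + g) = Lap G f + Lap G g := by
  funext v
  simp [Lap, edgeLap_add, Finset.sum_add_distrib]

theorem Lap_zero : Lap G 0 = 0 := by
  funext v
  simp [Lap, edgeLap_zero]

theorem Lap_neg (f : G.V → ℤ) : Lap G (-f) = -Lap G f :=
  eq_neg_of_add_eq_zero_left (by rw [← Lap_add, neg_add_cancel, Lap_zero])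

theorem Lap_eq_sum_of_edgeLap_eq_zero {f : G.V → ℤ} (s : Finset G.E)
    (h : ∀ e ∉ s, edgeLap G f e = 0) : Lap G f = ∑ e ∈ s, edgeLap G f e := by
  funext v
  rw [Finset.sum_apply]
  exact (Finset.sum_subset (Finset.subset_univ s) fun e _ he => by rw [h e he]; rfl).symm

namespace LinEquiv

variable {G} {D₁ D₂ D₃ D₄ : G.V → ℤ}

@[refl]
theorem refl (D : G.V → ℤ) : LinEquiv G D D := ⟨0, by rw [Lap_zero, add_zero]⟩

@[symm]
theorem symm : LinEquiv G D₁ D₂ → LinEquiv G D₂ D₁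
  | ⟨f, hf⟩ => ⟨-f, by rw [Lap_neg, hf]; abel⟩

@[trans]
theorem trans : LinEquiv G D₁ D₂ → LinEquiv G D₂ D₃ → LinEquiv G D₁ D₃
  | ⟨f, hf⟩, ⟨g, hg⟩ => ⟨f + g, by rw [Lap_add, hg, hf, add_assoc]⟩

theorem add : LinEquiv G D₁ D₂ → LinEquiv G D₃ D₄ → LinEquiv G (D₁ + D₃) (D₂ + D₄)
  | ⟨f, hf⟩, ⟨g, hg⟩ => ⟨f + g, by rw [Lap_add, hf, hg]; abel⟩

end LinEquiv

theorem equivalence_linEquiv : Equivalence (LinEquiv G) :=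
  ⟨LinEquiv.refl, LinEquiv.symm, LinEquiv.trans⟩

end Laplacian

section MGraph

variable {G : FinGraph} (σ : RealStructure G)

instance : Finite (RV σ) := Subtype.finite

instance : Finite (CompR σ) := Quotient.finite _

theorem RealStructure.ιV_involutive : Function.Involutive σ.ιV := σ.ιV_invol

theorem RealStructure.ιE_involutive : Function.Involutive σ.ιE := σ.ιE_invol

theorem compR_mk_eq_mk_of_mem {e : G.E} (he : NonIsolatedRealE σ e) {v w : RV σ}
    (hv : v.1 ∈ G.ψ e) (hw : w.1 ∈ G.ψ e) :
    (Quotient.mk (Relation.EqvGen.setoid (adjR σ)) v : CompR σ) = Quotient.mk _ w := by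
  by_cases hvw : v.1 = w.1
  · rw [Subtype.ext hvw]
  · exact Quotient.sound (.rel _ _ ⟨e, he, ((Sym2.mem_and_mem_iff hvw).mp ⟨hv, hw⟩)⟩)

theorem nonIsolatedRealE_iff_realE (hiso : ∀ e, ¬IsolatedRealE σ e) (e : G.E) :
    NonIsolatedRealE σ e ↔ RealE σ e :=
  ⟨And.left, fun he => ⟨he, fun v hv => by_contra fun hvr => hiso e ⟨he, v, hv, hvr⟩⟩⟩

/-- Each non-isolated real edge lies in a single component of `G(ℝ)`, so summing
`g(G(ℝ)_i) + 1 = 2 + e_i - v_i` over the components gives `2 c + e(G(ℝ)) - v(G(ℝ))`. -/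
theorem sNum_eq :
    sNum σ = Nat.card {e // IsolatedRealE σ e} + 2 * Nat.card (CompR σ)
      + Nat.card {e // NonIsolatedRealE σ e} - Nat.card (RV σ) := by
  have := Fintype.ofFinite (CompR σ)
  let comp : {e // NonIsolatedRealE σ e} → CompR σ := fun e =>
    Quotient.mk _ ⟨(G.ψ e.1).out.1, e.2.2 _ (Sym2.out_fst_mem _)⟩
  have hfiber : ∀ c : CompR σ, Nat.card {e // NonIsolatedRealE σ e ∧ ∃ v : RV σ, v.1 ∈ G.ψ e ∧
      Quotient.mk (Relation.EqvGen.setoid (adjR σ)) v = c} = Nat.card {e // comp e = c} := by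
    refine fun c => Nat.card_congr
      { toFun := fun e => ⟨⟨e.1, e.2.1⟩, ?_⟩
        invFun := fun e => ⟨e.1.1, e.1.2, _, Sym2.out_fst_mem _, e.2⟩
        left_inv := fun _ => rfl
        right_inv := fun _ => rfl }
    obtain ⟨v, hv, rfl⟩ := e.2.2
    exact compR_mk_eq_mk_of_mem σ e.2.1 (Sym2.out_fst_mem _) hv
  have hedges : ∑ c : CompR σ, (Nat.card {e // NonIsolatedRealE σ e ∧ ∃ v : RV σ,
      v.1 ∈ G.ψ e ∧ Quotient.mk (Relation.EqvGen.setoid (adjR σ)) v = c} : ℤ) =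
      Nat.card {e // NonIsolatedRealE σ e} := by
    simp only [hfiber]
    exact_mod_cast (Nat.card_eq_sum_card_fiber comp).symm
  have hverts : ∑ c : CompR σ,
      (Nat.card {v : RV σ // Quotient.mk (Relation.EqvGen.setoid (adjR σ)) v = c} : ℤ) =
      Nat.card (RV σ) := by
    exact_mod_cast (Nat.card_eq_sum_card_fiber _).symm
  rw [sNum, finsum_eq_sum_of_fintype, Nat.card_eq_fintype_card (α := CompR σ)]
  simp only [compGenus, Finset.sum_add_distrib, Finset.sum_sub_distrib, hedges, hverts,
    Finset.sum_const, Finset.card_univ, nsmul_eq_mul]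
  ring

theorem two_mul_card_quotient_vertices :
    2 * Nat.card (Quotient (involSetoid σ.ιV_involutive)) = Nat.card G.V + Nat.card (RV σ) := by
  rw [two_mul_card_quotient_involSetoid]
  rfl

theorem two_mul_card_quotient_edges (hiso : ∀ e, ¬IsolatedRealE σ e) :
    2 * Nat.card (Quotient (involSetoid σ.ιE_involutive)) =
      Nat.card G.E + Nat.card {e // NonIsolatedRealE σ e} := by
  rw [two_mul_card_quotient_involSetoid, Nat.card_congr (Equiv.subtypeEquivRight
      (nonIsolatedRealE_iff_realE σ hiso))]
  rfl

theorem genus_eq_of_connected (h : G.Connected) :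
    G.genus = 1 + Nat.card G.E - Nat.card G.V := by
  rw [genus, numComponents_eq_one_of_connected G h, Nat.card_eq_fintype_card,
    Nat.card_eq_fintype_card]
  push_cast
  ring

/-- The quotient graph `G / ι`. -/
noncomputable def RealStructure.quotGraph : FinGraph where
  V := Quotient (involSetoid σ.ιV_involutive)
  E := Quotient (involSetoid σ.ιE_involutive)
  decV := Classical.decEq _
  fintV := Fintype.ofFinite _
  fintE := Fintype.ofFinite _
  ψ := Quotient.lift (fun e => (G.ψ e).map (Quotient.mk _)) <| by
    rintro _ e (rfl | rfl)
    · rfl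
    · simp only [σ.compat, Sym2.map_map, Function.comp_def, involSetoid_mk_apply]

def RealStructure.quotV : G.V → σ.quotGraph.V := Quotient.mk _

def RealStructure.quotE : G.E → σ.quotGraph.E := Quotient.mk _

theorem quotV_surjective : Function.Surjective σ.quotV := Quotient.mk_surjective

theorem quotV_ιV (x : G.V) : σ.quotV (σ.ιV x) = σ.quotV x := involSetoid_mk_apply _ x

theorem quotE_eq_quotE_iff {e e' : G.E} : σ.quotE e = σ.quotE e' ↔ e = e' ∨ e = σ.ιE e' :=
  involSetoid_mk_eq_mk_iff _

theorem quotGraph_ψ_quotE {e : G.E} {x y : G.V} (h : G.ψ e = s(x, y)) :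
    σ.quotGraph.ψ (σ.quotE e) = s(σ.quotV x, σ.quotV y) := by
  change (G.ψ e).map _ = _
  rw [h, Sym2.map_mk]
  rfl

theorem quotGraph_connected (h : G.Connected) : σ.quotGraph.Connected := by
  obtain ⟨⟨v⟩, hconn⟩ := h
  refine ⟨⟨σ.quotV v⟩, fun a b => ?_⟩
  obtain ⟨x, rfl⟩ := quotV_surjective σ a
  obtain ⟨y, rfl⟩ := quotV_surjective σ b
  induction hconn x y with
  | refl => exact .refl
  | tail _ hpq ih =>
    obtain ⟨e, he⟩ := hpq
    exact ih.tail ⟨σ.quotE e, quotGraph_ψ_quotE σ he⟩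

theorem card_quotGraph_V_eq_card_E_add_one (hM : IsStrongMGraph σ) :
    Nat.card σ.quotGraph.V = Nat.card σ.quotGraph.E + 1 := by
  obtain ⟨⟨hconn, hiso, hs⟩, hc⟩ := hM
  have hV := two_mul_card_quotient_vertices σ
  have hE := two_mul_card_quotient_edges σ hiso
  have hs' := sNum_eq σ
  have hg := genus_eq_of_connected hconn
  have : IsEmpty {e // IsolatedRealE σ e} := ⟨fun e => hiso e.1 e.2⟩
  have hiso' : Nat.card {e // IsolatedRealE σ e} = 0 := Nat.card_of_isEmpty
  change Nat.card (Quotient (involSetoid σ.ιV_involutive)) =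
    Nat.card (Quotient (involSetoid σ.ιE_involutive)) + 1
  omega

open Classical in
/-- The side of the bridge `[e]` of the tree `G / ι` containing `[x]`, pulled back to `G`. -/
theorem exists_lap_eq_sum_orbit (hM : IsStrongMGraph σ) {e : G.E} {x y : G.V}
    (h : G.ψ e = s(x, y)) :
    ∃ f : G.V → ℤ, f x = 1 ∧ f y = 0 ∧ f (σ.ιV x) = 1 ∧ f (σ.ιV y) = 0 ∧
      Lap G f = ∑ e' ∈ {e, σ.ιE e}, edgeLap G f e' := by
  obtain ⟨S, hx, hy, hcut⟩ := exists_cut_of_card_V_eq_card_E_add_one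
    (quotGraph_connected σ hM.1.1) (card_quotGraph_V_eq_card_E_add_one σ hM)
    (quotGraph_ψ_quotE σ h)
  let f : G.V → ℤ := fun z => if σ.quotV z ∈ S then 1 else 0
  refine ⟨f, by simp [f, hx], by simp [f, hy], by simp [f, quotV_ιV, hx],
    by simp [f, quotV_ιV, hy], Lap_eq_sum_of_edgeLap_eq_zero G _ fun e' he' => ?_⟩
  obtain ⟨p, q, hpq⟩ := Sym2.exists_eq_mk (G.ψ e')
  have hne : σ.quotE e' ≠ σ.quotE e := by
    rw [Ne, quotE_eq_quotE_iff]
    simpa [not_or] using he'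
  have hside := hcut _ hne _ _ (quotGraph_ψ_quotE σ hpq)
  have hf : f q = f p := by simp [f, hside]
  rw [edgeLap_of_ψ_eq G f hpq, hf]
  simp only [sub_self, ite_self, add_zero]
  rfl

theorem linEquiv_unitDiv_of_realE (hM : IsStrongMGraph σ) {e : G.E} {x y : G.V}
    (h : G.ψ e = s(x, y)) (he : RealE σ e) : LinEquiv G (unitDiv G x) (unitDiv G y) := by
  classical
  obtain ⟨f, hx, hy, -, -, hf⟩ := exists_lap_eq_sum_orbit σ hM h
  rw [he, Finset.pair_eq_singleton, Finset.sum_singleton, edgeLap_eq_unitDiv_sub G h hx hy] at hf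
  exact ⟨f, by rw [hf]; abel⟩

theorem linEquiv_conj_pair_of_ψ_eq (hM : IsStrongMGraph σ) {e : G.E} {x y : G.V}
    (h : G.ψ e = s(x, y)) :
    LinEquiv G (unitDiv G x + unitDiv G (σ.ιV x)) (unitDiv G y + unitDiv G (σ.ιV y)) := by
  classical
  by_cases he : RealE σ e
  · have hreal := ((nonIsolatedRealE_iff_realE σ hM.1.2.1 e).mpr he).2
    rw [hreal x (by simp [h]), hreal y (by simp [h])]
    exact (linEquiv_unitDiv_of_realE σ hM h he).add (linEquiv_unitDiv_of_realE σ hM h he)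
  · obtain ⟨f, hx, hy, hιx, hιy, hf⟩ := exists_lap_eq_sum_orbit σ hM h
    have hιe : G.ψ (σ.ιE e) = s(σ.ιV x, σ.ιV y) := by rw [σ.compat, h, Sym2.map_mk]
    rw [Finset.sum_pair (Ne.symm he), edgeLap_eq_unitDiv_sub G h hx hy,
      edgeLap_eq_unitDiv_sub G hιe hιx hιy] at hf
    exact ⟨f, by rw [hf]; abel⟩

theorem linEquiv_conj_pair (hM : IsStrongMGraph σ) (x y : G.V) :
    LinEquiv G (unitDiv G x + unitDiv G (σ.ιV x)) (unitDiv G y + unitDiv G (σ.ιV y)) := by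
  induction hM.1.1.2 x y with
  | refl => rfl
  | tail _ hvw ih =>
    obtain ⟨e, he⟩ := hvw
    exact ih.trans (linEquiv_conj_pair_of_ψ_eq σ hM he)

theorem linEquiv_unitDiv_of_eqvGen (hM : IsStrongMGraph σ) {u w : RV σ}
    (h : Relation.EqvGen (adjR σ) u w) : LinEquiv G (unitDiv G u.1) (unitDiv G w.1) := by
  refine ((equivalence_linEquiv G).comap fun u : RV σ => unitDiv G u.1).eqvGen_iff.mp
    (h.mono fun _ _ ⟨e, he, hab⟩ => ?_)
  exact linEquiv_unitDiv_of_realE σ hM hab he.1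

end MGraph

end FinGraph

open FinGraph in
/-- On a strong M-graph, if `v'₁, v'₂` are real vertices in a
single connected component of `G(ℝ)` and likewise `v''₁, v''₂`, then
`v'₁ + v'₂ ∼ v''₁ + v''₂`. -/
theorem strongMGraph_pairs_equiv (G : FinGraph) (σ : RealStructure G)
    (hM : IsStrongMGraph σ) (v'₁ v'₂ v''₁ v''₂ : RV σ)
    (h' : Quotient.mk (Relation.EqvGen.setoid (adjR σ)) v'₁ =
          Quotient.mk (Relation.EqvGen.setoid (adjR σ)) v'₂)
    (h'' : Quotient.mk (Relation.EqvGen.setoid (adjR σ)) v''₁ =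
           Quotient.mk (Relation.EqvGen.setoid (adjR σ)) v''₂) :
    LinEquiv G (unitDiv G v'₁.1 + unitDiv G v'₂.1)
      (unitDiv G v''₁.1 + unitDiv G v''₂.1) := by
  have h₁ := linEquiv_unitDiv_of_eqvGen σ hM (Quotient.exact h')
  have h₂ := linEquiv_unitDiv_of_eqvGen σ hM (Quotient.exact h'')
  have hpair := linEquiv_conj_pair σ hM v'₁.1 v''₁.1
  rw [v'₁.2, v''₁.2] at hpair
  exact ((LinEquiv.refl _).add h₁.symm).trans (hpair.trans ((LinEquiv.refl _).add h₂))
end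

section
/- Let Q be a formally real field containing ℝ as a subfield. Then the ℝ-algebra Q ⊗_ℝ ℂ is a field. -/
/-!
Sending `X ↦ 1 ⊗ i` presents `Q ⊗_ℝ ℂ` as a quotient of `Q[X]/(X² + 1)`. As `-1` is not a
square in `Q`, the polynomial `X² + 1` is irreducible, so `Q[X]/(X² + 1)` is a field and the
surjection onto the nonzero ring `Q ⊗_ℝ ℂ` is an isomorphism.
-/

open Polynomial TensorProduct

theorem Polynomial.irreducible_X_sq_add_one {K : Type*} [Field K] (h : ¬ IsSquare (-1 : K)) :
    Irreducible (X ^ 2 + 1 : K[X]) := by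
  refine irreducible_of_degree_le_three_of_not_isRoot ?_ fun x hx => h ⟨x, ?_⟩
  · rw [show (X ^ 2 + 1 : K[X]) = X ^ 2 + C 1 by simp, natDegree_X_pow_add_C]
    simp
  · simp only [IsRoot.def, eval_add, eval_pow, eval_X, eval_one] at hx
    linear_combination -hx

theorem Function.Surjective.isField {F R : Type*} [Field F] [CommRing R] [Nontrivial R]
    {f : F →+* R} (hf : Function.Surjective f) : IsField R :=
  (RingEquiv.ofBijective f ⟨f.injective, hf⟩).symm.toMulEquiv.isField (Field.toIsField F)

namespace AdjoinRoot

variable (K : Type*) [CommRing K] [Algebra ℝ K]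

noncomputable def toTensorComplex : AdjoinRoot (X ^ 2 + 1 : K[X]) →ₐ[K] K ⊗[ℝ] ℂ :=
  liftAlgHom _ (Algebra.ofId K _) (1 ⊗ₜ Complex.I) <| by
    simp [Algebra.TensorProduct.tmul_pow, tmul_neg, ← Algebra.TensorProduct.one_def]

theorem toTensorComplex_surjective : Function.Surjective (toTensorComplex K) := by
  rw [← AlgHom.range_eq_top, eq_top_iff]
  rintro x -
  induction x using TensorProduct.induction_on with
  | zero => exact zero_mem _
  | add x y hx hy => exact add_mem hx hy
  | tmul a z =>
    have hI : (1 : K) ⊗ₜ[ℝ] Complex.I ∈ (toTensorComplex K).range :=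
      ⟨root _, by simp [toTensorComplex]⟩
    have hdecomp : a ⊗ₜ[ℝ] z =
        algebraMap K _ (z.re • a) + algebraMap K _ (z.im • a) * (1 ⊗ₜ Complex.I) := by
      simp only [Algebra.TensorProduct.algebraMap_apply, Algebra.TensorProduct.tmul_mul_tmul,
        mul_one, one_mul, Algebra.algebraMap_self, RingHom.id_apply]
      rw [smul_tmul, smul_tmul, ← tmul_add, Complex.real_smul, Complex.real_smul, mul_one,
        Complex.re_add_im]
    rw [hdecomp]
    exact add_mem (Subalgebra.algebraMap_mem _ _) (mul_mem (Subalgebra.algebraMap_mem _ _) hI)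

end AdjoinRoot

theorem isField_tensor_complex_of_not_isSquare {K : Type*} [Field K] [Algebra ℝ K]
    (h : ¬ IsSquare (-1 : K)) : IsField (K ⊗[ℝ] ℂ) :=
  have : Fact (Irreducible (X ^ 2 + 1 : K[X])) := ⟨irreducible_X_sq_add_one h⟩
  (AdjoinRoot.toTensorComplex_surjective K).isField (f := (AdjoinRoot.toTensorComplex K).toRingHom)

open TensorProduct in
/-- If `Q` is a formally real field containing `ℝ` (i.e. a
field extension of `ℝ` in which `-1` is not a sum of squares), then the
`ℝ`-algebra `Q ⊗_ℝ ℂ` is a field. -/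
theorem tensor_complex_isField (Q : Type) [Field Q] [Algebra ℝ Q]
    (hQ : ¬ IsSumSq (-1 : Q)) :
    IsField (Q ⊗[ℝ] ℂ) :=
  isField_tensor_complex_of_not_isSquare fun h => hQ h.isSumSq
end

section
/- Let R be a complete discrete valuation ring containing ℝ such that the fraction field of R is a formally real field and the residue field R/m is a finite extension of ℝ (via the composite ℝ → R → R/m). Then the residue field is equal to ℝ, i.e., the composite map ℝ → R/m is an isomorphism. -/
/-!
Since `R` is complete, it is Henselian, so a square root of `-1` in the residue field `k` would
lift (it is a simple root of `X ^ 2 + 1`, as `2 ≠ 0` in the `ℝ`-algebra `k`) to a square root of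
`-1` in `R`, and hence in the formally real field `Frac R`. So `k` is an algebraic extension of `ℝ`
without a square root of `-1`; being isomorphic to `ℝ` or `ℂ`, it must be `ℝ`.
-/

open Polynomial IsLocalRing

theorem HenselianRing.exists_sq_eq_of_residue_eq_sq {R : Type*} [CommRing R] [IsLocalRing R]
    [HenselianRing R (maximalIdeal R)] (h2 : (2 : ResidueField R) ≠ 0) {a : R}
    {y : ResidueField R} (hy0 : y ≠ 0) (hy : y ^ 2 = residue R a) : ∃ b : R, b ^ 2 = a := by
  obtain ⟨c, rfl⟩ := residue_surjective y
  have hroot : (X ^ 2 - C a).eval c ∈ maximalIdeal R := by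
    rw [← residue_eq_zero_iff]
    simp [hy]
  have hsimple : IsUnit (residue R ((X ^ 2 - C a).derivative.eval c)) := by
    have : residue R ((X ^ 2 - C a).derivative.eval c) = 2 * residue R c := by
      simp [one_add_one_eq_two, map_ofNat]
    exact isUnit_iff_ne_zero.mpr (this ▸ mul_ne_zero h2 hy0)
  obtain ⟨b, hb, -⟩ :=
    HenselianRing.is_henselian _ (monic_X_pow_sub_C a two_ne_zero) c hroot hsimple
  exact ⟨b, by simpa [sub_eq_zero] using hb⟩

theorem Real.algebraMap_surjective_of_forall_sq_ne_neg_one (F : Type*) [Field F] [Algebra ℝ F]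
    [Algebra.IsAlgebraic ℝ F] (h : ∀ y : F, y ^ 2 ≠ -1) : Function.Surjective (algebraMap ℝ F) := by
  obtain ⟨⟨e⟩⟩ | ⟨⟨e⟩⟩ := Real.nonempty_algEquiv_or F
  · exact fun x ↦ ⟨e x, by simpa using (e.symm.commutes (e x)).symm⟩
  · exact absurd (by simp [← map_pow]) (h (e.symm Complex.I))

/-- If `R` is a complete discrete valuation ring containing
`ℝ` whose fraction field is formally real (`-1` is not a sum of squares in it)
and whose residue field is a finite extension of `ℝ` via the composite
`ℝ → R → R/m`, then this composite `ℝ → R/m` is an isomorphism. -/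
theorem residueField_eq_real (R : Type) [CommRing R] [IsDomain R]
    [IsDiscreteValuationRing R] [Algebra ℝ R]
    [IsAdicComplete (IsLocalRing.maximalIdeal R) R]
    (hreal : ¬ IsSumSq (-1 : FractionRing R))
    (hfin : ((IsLocalRing.residue R).comp (algebraMap ℝ R)).Finite) :
    Function.Bijective ((IsLocalRing.residue R).comp (algebraMap ℝ R)) := by
  have : Module.Finite ℝ (ResidueField R) := RingHom.finite_algebraMap.mp hfin
  have : CharZero (ResidueField R) :=
    charZero_of_injective_algebraMap (algebraMap ℝ (ResidueField R)).injective
  refine ⟨(algebraMap ℝ (ResidueField R)).injective,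
    Real.algebraMap_surjective_of_forall_sq_ne_neg_one _ fun y hy ↦ hreal ?_⟩
  have hy0 : y ≠ 0 := by rintro rfl; simp at hy
  obtain ⟨b, hb⟩ :=
    HenselianRing.exists_sq_eq_of_residue_eq_sq two_ne_zero hy0 (by rw [hy, map_neg, map_one])
  have := IsSumSq.mul_self (algebraMap R (FractionRing R) b)
  rwa [← sq, ← map_pow, hb, map_neg, map_one] at this
end
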